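/- arXiv:0905.3998 — 2 statements merged into one kernel-verified Lean document; each statement's English description precedes it below -/
import Mathlib

section
/- For any interface X, the identity relation Id_{|X|} = {(a,a) | a ∈ |X|} is a seed of the interface X ⊸ X. -/
/-- A (monotone) predicate transformer on a set together with its state space:
an *interface*. -/
structure Interface (α : Type*) where
  P : Set α → Set α
  mono : Monotone P

/-- A seed of an interface: a subset `x` with `x ⊆ P x`. -/
def Seed {α : Type*} (X : Interface α) (x : Set α) : Prop := x ⊆ X.P x

/-- Direct image of a set along a relation. -/
def dimage {α β : Type*} (r : Set (α × β)) (x : Set α) : Set β :=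
  {b | ∃ a ∈ x, (a, b) ∈ r}

/-- The dual interface: `P⊥ x = (P xᶜ)ᶜ`. -/
def Interface.dual {α : Type*} (X : Interface α) : Interface α where
  P x := (X.P xᶜ)ᶜ
  mono := fun x y hxy =>
    Set.compl_subset_compl.mpr (X.mono (Set.compl_subset_compl.mpr hxy))

/-- The tensor of two interfaces. -/
def Interface.tensor {α β : Type*} (X : Interface α) (Y : Interface β) :
    Interface (α × β) where
  P r := ⋃ (x : Set α) (y : Set β) (_ : x ×ˢ y ⊆ r), X.P x ×ˢ Y.P y
  mono := by
    intro r s hrs p hp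
    simp only [Set.mem_iUnion] at hp ⊢
    obtain ⟨x, y, hxy, hpx⟩ := hp
    exact ⟨x, y, hxy.trans hrs, hpx⟩

/-- The par of two interfaces: `X ⅋ Y = (X⊥ ⊗ Y⊥)⊥`. -/
def Interface.par {α β : Type*} (X : Interface α) (Y : Interface β) :
    Interface (α × β) :=
  (X.dual.tensor Y.dual).dual

/-- The linear arrow: `X ⊸ Y = X⊥ ⅋ Y`. -/
def Interface.lolli {α β : Type*} (X : Interface α) (Y : Interface β) :
    Interface (α × β) :=
  X.dual.par Y

/-- The with of two interfaces, on the disjoint sum of the state spaces. -/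
def Interface.wth {α β : Type*} (X : Interface α) (Y : Interface β) :
    Interface (α ⊕ β) where
  P z := Sum.inl '' X.P (Sum.inl ⁻¹' z) ∪ Sum.inr '' Y.P (Sum.inr ⁻¹' z)
  mono := by
    intro z w hzw
    exact Set.union_subset_union
      (Set.image_mono (X.mono (Set.preimage_mono hzw)))
      (Set.image_mono (Y.mono (Set.preimage_mono hzw)))

/-- `⋆ᵢ xᵢ` for a multiset of sets: the multisets obtained by picking one element
in each set (up to a bijective pairing). -/
def mstar {α : Type*} (S : Multiset (Set α)) : Set (Multiset α) :=
  {m | Multiset.Rel (fun a x => a ∈ x) m S}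

/-- The exponential `!X`: `[a₁,…,aₙ] ∈ !P(U)` iff there are sets `x₁,…,xₙ` with
`⋆ᵢ xᵢ ⊆ U` and `aᵢ ∈ P xᵢ` for all `i`. -/
def Interface.bang {α : Type*} (X : Interface α) : Interface (Multiset α) where
  P U := {m | ∃ S : Multiset (Set α),
    mstar S ⊆ U ∧ Multiset.Rel (fun a x => a ∈ X.P x) m S}
  mono := by
    intro U V hUV m hm
    obtain ⟨S, hS, hrel⟩ := hm
    exact ⟨S, hS.trans hUV, hrel⟩

/-! A relation `r` lies in `P_{X⊸Y}(r)` at `(a, b)` exactly when it is a simulation there: every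
`x` with `a ∈ P_X x` is carried by `r` to a set `r[x]` with `b ∈ P_Y r[x]`. The identity relation
carries every `x` to itself, so it is a simulation, i.e. a seed of `X ⊸ X`. -/

section

variable {α β : Type*}

theorem prod_subset_compl_iff_dimage_subset_compl {r : Set (α × β)} {x : Set α} {y : Set β} :
    x ×ˢ y ⊆ rᶜ ↔ dimage r x ⊆ yᶜ := by
  constructor
  · rintro h b ⟨a, ha, hab⟩ hb
    exact h ⟨ha, hb⟩ hab
  · rintro h ⟨a, b⟩ ⟨ha, hb⟩ hab
    exact h ⟨a, ha, hab⟩ hb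

theorem dimage_diagonal (x : Set α) : dimage (Set.diagonal α) x = x := by
  ext a
  simp [dimage]

namespace Interface

theorem mem_lolli_P_iff {X : Interface α} {Y : Interface β} {r : Set (α × β)} {a : α} {b : β} :
    (a, b) ∈ (X.lolli Y).P r ↔ ∀ x, a ∈ X.P x → b ∈ Y.P (dimage r x) := by
  simp only [lolli, par, dual, tensor, compl_compl, Set.mem_compl_iff, Set.mem_iUnion,
    Set.mem_prod, not_exists, not_and, not_not, prod_subset_compl_iff_dimage_subset_compl]
  constructor
  · intro h x hx
    simpa only [compl_compl] using h x (dimage r x)ᶜ (compl_compl _).ge hx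
  · intro h x y hxy hx
    exact Y.mono hxy (h x hx)

end Interface

end

/-- the identity relation is a seed of `X ⊸ X`. -/
theorem identity_seed_lolli {α : Type*} (X : Interface α) :
    Seed (X.lolli X) {p : α × α | p.1 = p.2} := by
  change Seed (X.lolli X) (Set.diagonal α)
  rintro ⟨a, b⟩ (rfl : a = b)
  refine Interface.mem_lolli_P_iff.2 fun x hx => ?_
  rwa [dimage_diagonal]
end

section
/- Let X, X', Y, Y' be interfaces. If r is a seed of X ⊸ X' and s is a seed of Y ⊸ Y', then the relation r ⊗ s = {((a,b),(a',b')) | (a,a') ∈ r and (b,b') ∈ s} is a seed of (X ⊗ Y) ⊸ (X' ⊗ Y'). (Bifunctoriality of the tensor product; this is the essential content of the soundness of the tensor rule.) -/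
/-!
Seeds of `X ⊸ Y` are exactly the relations `r` along which `P` is transported: if `(a, b) ∈ r`
and `a ∈ P_X x` then `b ∈ P_Y r[x]`. The direct image of a rectangle `x × y` under `r ⊗ s` is the
rectangle `r[x] × s[y]`, so the rectangles witnessing `P_{X ⊗ Y}` are carried to rectangles
witnessing `P_{X' ⊗ Y'}`.
-/

def relProd {α α' β β' : Type*} (r : Set (α × α')) (s : Set (β × β')) :
    Set ((α × β) × (α' × β')) :=
  {q | (q.1.1, q.2.1) ∈ r ∧ (q.1.2, q.2.2) ∈ s}

lemma dimage_mono {α β : Type*} (r : Set (α × β)) {x y : Set α} (h : x ⊆ y) :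
    dimage r x ⊆ dimage r y :=
  fun _ ⟨a, ha, hab⟩ => ⟨a, h ha, hab⟩

lemma dimage_subset_compl_iff {α β : Type*} (r : Set (α × β)) (x : Set α) (y : Set β) :
    dimage r x ⊆ yᶜ ↔ x ×ˢ y ⊆ rᶜ := by
  constructor
  · rintro h ⟨a, b⟩ ⟨ha, hb⟩ hab
    exact h ⟨a, ha, hab⟩ hb
  · rintro h b ⟨a, ha, hab⟩ hb
    exact h ⟨ha, hb⟩ hab

lemma dimage_relProd_prod {α α' β β' : Type*} (r : Set (α × α')) (s : Set (β × β'))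
    (x : Set α) (y : Set β) :
    dimage (relProd r s) (x ×ˢ y) = dimage r x ×ˢ dimage s y := by
  ext ⟨a', b'⟩
  constructor
  · rintro ⟨⟨a, b⟩, ⟨ha, hb⟩, har, hbs⟩
    exact ⟨⟨a, ha, har⟩, ⟨b, hb, hbs⟩⟩
  · rintro ⟨⟨a, ha, har⟩, ⟨b, hb, hbs⟩⟩
    exact ⟨(a, b), ⟨ha, hb⟩, har, hbs⟩

namespace Interface

@[simp]
lemma dual_dual {α : Type*} (X : Interface α) : X.dual.dual = X := by
  cases X
  simp only [dual, compl_compl]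

lemma mem_tensor_P {α β : Type*} (X : Interface α) (Y : Interface β) (r : Set (α × β))
    (p : α × β) :
    p ∈ (X.tensor Y).P r ↔ ∃ x y, x ×ˢ y ⊆ r ∧ p.1 ∈ X.P x ∧ p.2 ∈ Y.P y := by
  simp only [tensor, Set.mem_iUnion, Set.mem_prod, exists_prop]

lemma mem_lolli_P {α β : Type*} (X : Interface α) (Y : Interface β) (r : Set (α × β))
    (p : α × β) :
    p ∈ (X.lolli Y).P r ↔ ∀ x y, x ×ˢ y ⊆ rᶜ → p.1 ∈ X.P x → p.2 ∈ Y.P yᶜ := by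
  simp only [lolli, par, dual_dual]
  simp only [dual, Set.mem_compl_iff, mem_tensor_P, not_exists, not_and, not_not]

lemma seed_lolli_iff {α β : Type*} (X : Interface α) (Y : Interface β) (r : Set (α × β)) :
    Seed (X.lolli Y) r ↔ ∀ a b, (a, b) ∈ r → ∀ x, a ∈ X.P x → b ∈ Y.P (dimage r x) := by
  simp only [Seed, Set.subset_def, Prod.forall]
  refine forall₃_congr fun a b _ => ?_
  rw [mem_lolli_P]
  refine forall_congr' fun x => ⟨fun h ha => ?_, fun h y hxy ha => ?_⟩
  · simpa using h (dimage r x)ᶜ ((dimage_subset_compl_iff r x _).1 (by simp)) ha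
  · exact Y.mono ((dimage_subset_compl_iff r x y).2 hxy) (h ha)

end Interface

/-- bifunctoriality of the tensor product: the tensor of two linear
arrows is a linear arrow between the tensors. -/
theorem tensor_of_seeds_lolli {α α' β β' : Type*}
    (X : Interface α) (X' : Interface α') (Y : Interface β) (Y' : Interface β')
    (r : Set (α × α')) (s : Set (β × β'))
    (hr : Seed (X.lolli X') r) (hs : Seed (Y.lolli Y') s) :
    Seed ((X.tensor Y).lolli (X'.tensor Y'))
      {q : (α × β) × (α' × β') | (q.1.1, q.2.1) ∈ r ∧ (q.1.2, q.2.2) ∈ s} := by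
  change Seed _ (relProd r s)
  rw [Interface.seed_lolli_iff] at hr hs ⊢
  rintro ⟨a, b⟩ ⟨a', b'⟩ ⟨har, hbs⟩ u hab
  obtain ⟨x, y, hxy, ha, hb⟩ := (Interface.mem_tensor_P X Y u _).1 hab
  have hsub : dimage r x ×ˢ dimage s y ⊆ dimage (relProd r s) u :=
    dimage_relProd_prod r s x y ▸ dimage_mono _ hxy
  exact (Interface.mem_tensor_P X' Y' _ _).2 ⟨_, _, hsub, hr a a' har x ha, hs b b' hbs y hb⟩
end
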